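/- (Main theorem: survivor criteria) Every survivor n satisfies exactly one of the following: (i) n is prime; (ii) n = p·q where p and q are distinct odd primes; (iii) n = 9. -/

import Mathlib

/-- Sum of the distinct prime divisors of `n`. -/
def primeSum (n : ℕ) : ℕ := ∑ p ∈ n.primeFactors, p

/-- Sum of the positive divisors of `n` which are not prime (including `1`,
and including `n` itself whenever `n` is not prime). -/
def compositeSum (n : ℕ) : ℕ := ∑ d ∈ n.divisors.filter (fun d => ¬ d.Prime), d

/-- The map `X(n) = Π(n) − C(n) + n`, regarded as an integer. -/
def X (n : ℕ) : ℤ := (primeSum n : ℤ) - (compositeSum n : ℤ) + n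

/-- `n` is a survivor if there is a sequence of positive integers starting at `n`
whose successive terms are given by `X`; i.e., all iterates of `X` from `n` stay positive. -/
def Survivor (n : ℕ) : Prop :=
  ∃ a : ℕ → ℕ, a 0 = n ∧ (∀ i, 0 < a i) ∧ ∀ i, (a (i + 1) : ℤ) = X (a i)

/-!
For composite `n` the divisors `1` and `n` alone give `X(n) ≤ Π(n) - 1`. Let `p` be the least
prime factor of `n`. If `n / p` is composite, one more composite divisor (`p ^ 2` when `n` is a
power of `p`, otherwise the products `p * r` over the other prime factors `r`) makes `X(n) < 0`.
Otherwise `n = p * q` with primes `p ≤ q`, and `X(n)` is `p - 1` if `p = q` and `p + q - 1` if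
not. Hence an `n` that is neither prime, nor `9`, nor a product of two distinct odd primes
has `X(n) ≤ 0` (this includes `n = 1`) unless it is `4`, `p ^ 2` with `p ≥ 5`, or `2 * q` with
`q` odd; then `X(n)` is `1` or an even number `≥ 4`, again such a number, and smaller than `n`.
Strong induction finishes the proof.
-/

def IsOddSquarefreeSemiprime (n : ℕ) : Prop :=
  ∃ p q : ℕ, p.Prime ∧ q.Prime ∧ Odd p ∧ Odd q ∧ p ≠ q ∧ n = p * q

def SatisfiesSurvivorCriteria (n : ℕ) : Prop :=
  n.Prime ∨ IsOddSquarefreeSemiprime n ∨ n = 9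

lemma IsOddSquarefreeSemiprime.not_prime {n : ℕ} (h : IsOddSquarefreeSemiprime n) :
    ¬ n.Prime := by
  obtain ⟨p, q, hp, hq, -, -, -, rfl⟩ := h
  exact Nat.not_prime_mul hp.ne_one hq.ne_one

lemma IsOddSquarefreeSemiprime.odd {n : ℕ} (h : IsOddSquarefreeSemiprime n) : Odd n := by
  obtain ⟨p, q, -, -, hp, hq, -, rfl⟩ := h
  exact hp.mul hq

lemma not_isOddSquarefreeSemiprime_nine : ¬ IsOddSquarefreeSemiprime 9 := by
  rintro ⟨p, q, hp, hq, -, -, hpq, h⟩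
  have hp3 : p = 3 := (Nat.prime_dvd_prime_iff_eq hp Nat.prime_three).1
    (hp.dvd_of_dvd_pow (n := 2) ⟨q, h⟩)
  have hq3 : q = 3 := (Nat.prime_dvd_prime_iff_eq hq Nat.prime_three).1
    (hq.dvd_of_dvd_pow (n := 2) ⟨p, h.trans (mul_comm p q)⟩)
  exact hpq (hp3.trans hq3.symm)

lemma not_satisfiesSurvivorCriteria_one : ¬ SatisfiesSurvivorCriteria 1 := by
  rintro (h | h | h)
  · exact Nat.not_prime_one h
  · obtain ⟨p, q, hp, -, -, -, -, h⟩ := h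
    exact hp.ne_one (mul_eq_one.1 h.symm).1
  · omega

lemma not_satisfiesSurvivorCriteria_of_even {m : ℕ} (hm : Even m) (h4 : 4 ≤ m) :
    ¬ SatisfiesSurvivorCriteria m := by
  rintro (h | h | rfl)
  · have := (h.even_iff).1 hm
    omega
  · exact Nat.not_odd_iff_even.2 hm h.odd
  · exact Nat.not_even_iff_odd.2 (by decide) hm

lemma sum_le_compositeSum {n : ℕ} (hn : n ≠ 0) {s : Finset ℕ}
    (hs : ∀ d ∈ s, d ∣ n ∧ ¬ d.Prime) : ∑ d ∈ s, d ≤ compositeSum n :=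
  Finset.sum_le_sum_of_subset fun d hd =>
    Finset.mem_filter.2 ⟨Nat.mem_divisors.2 ⟨(hs d hd).1, hn⟩, (hs d hd).2⟩

lemma filter_not_prime_divisors_mul {p q : ℕ} (hp : p.Prime) (hq : q.Prime) :
    (p * q).divisors.filter (fun d => ¬ d.Prime) = {1, p * q} := by
  ext d
  simp only [Finset.mem_filter, Nat.mem_divisors, Finset.mem_insert, Finset.mem_singleton]
  constructor
  · rintro ⟨⟨hd, -⟩, hdp⟩
    obtain ⟨a, b, ha, hb, rfl⟩ := Nat.dvd_mul.1 hd
    rcases hp.eq_one_or_self_of_dvd a ha with rfl | rfl <;>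
      rcases hq.eq_one_or_self_of_dvd b hb with rfl | rfl <;> simp_all
  · have hpq : p * q ≠ 0 := mul_ne_zero hp.ne_zero hq.ne_zero
    rintro (rfl | rfl)
    · exact ⟨⟨one_dvd _, hpq⟩, Nat.not_prime_one⟩
    · exact ⟨⟨dvd_rfl, hpq⟩, Nat.not_prime_mul hp.ne_one hq.ne_one⟩

lemma compositeSum_mul_of_prime {p q : ℕ} (hp : p.Prime) (hq : q.Prime) :
    compositeSum (p * q) = 1 + p * q := by
  have h4 : 2 * 2 ≤ p * q := Nat.mul_le_mul hp.two_le hq.two_le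
  rw [compositeSum, filter_not_prime_divisors_mul hp hq, Finset.sum_pair (by omega)]

lemma X_mul_of_prime {p q : ℕ} (hp : p.Prime) (hq : q.Prime) :
    X (p * q) = primeSum (p * q) - 1 := by
  rw [X, compositeSum_mul_of_prime hp hq]
  push_cast
  ring

lemma primeSum_mul_self {p : ℕ} (hp : p.Prime) : primeSum (p * p) = p := by
  rw [primeSum, Nat.primeFactors_mul hp.ne_zero hp.ne_zero, hp.primeFactors,
    Finset.union_self, Finset.sum_singleton]

lemma primeSum_mul_of_ne {p q : ℕ} (hp : p.Prime) (hq : q.Prime) (hpq : p ≠ q) :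
    primeSum (p * q) = p + q := by
  rw [primeSum, Nat.primeFactors_mul hp.ne_zero hq.ne_zero, hp.primeFactors, hq.primeFactors,
    ← Finset.insert_eq, Finset.sum_pair hpq]

lemma X_neg_of_primeFactors_eq_singleton {n p : ℕ} (hpf : n.primeFactors = {p})
    (hpp : p * p ∣ n) (hne : p * p ≠ n) : X n < 0 := by
  have hp : p.Prime := Nat.prime_of_mem_primeFactors (hpf ▸ Finset.mem_singleton_self p)
  have hn : n ≠ 0 := by rintro rfl; simp at hpf
  have hlt : p * p < n := lt_of_le_of_ne (Nat.le_of_dvd (Nat.pos_of_ne_zero hn) hpp) hne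
  have hp2 := hp.two_le
  have hpp2 : 2 * 2 ≤ p * p := Nat.mul_le_mul hp2 hp2
  have hC : 1 + (p * p + n) ≤ compositeSum n := by
    have hs := sum_le_compositeSum (s := {1, p * p, n}) hn <| by
      simp only [Finset.mem_insert, Finset.mem_singleton]
      rintro d (rfl | rfl | rfl)
      · exact ⟨one_dvd n, Nat.not_prime_one⟩
      · exact ⟨hpp, Nat.not_prime_mul hp.ne_one hp.ne_one⟩
      · exact ⟨dvd_rfl, Nat.not_prime_of_dvd_of_lt hpp (by omega) hlt⟩
    rwa [Finset.sum_insert (by simp only [Finset.mem_insert, Finset.mem_singleton]; omega),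
      Finset.sum_pair (by omega)] at hs
  have hprime : primeSum n = p := by rw [primeSum, hpf, Finset.sum_singleton]
  rw [X, hprime]
  zify at hC hp2
  nlinarith

lemma one_add_add_mul_sum_erase_le_compositeSum {n p : ℕ} (hp : p ∈ n.primeFactors)
    (hnp : ¬ n.Prime) (hdiv : ¬ (n / p).Prime) :
    1 + (n + p * ∑ r ∈ n.primeFactors.erase p, r) ≤ compositeSum n := by
  have hE : ∀ r ∈ n.primeFactors.erase p, r.Prime ∧ r ∣ n ∧ r ≠ p := fun r hr =>
    ⟨Nat.prime_of_mem_primeFactors (Finset.mem_of_mem_erase hr),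
      Nat.dvd_of_mem_primeFactors (Finset.mem_of_mem_erase hr), Finset.ne_of_mem_erase hr⟩
  obtain ⟨hp, hpn, hn⟩ := Nat.mem_primeFactors.1 hp
  have hn1 : 1 < n := hp.one_lt.trans_le (Nat.le_of_dvd (Nat.pos_of_ne_zero hn) hpn)
  have hpr : ∀ r ∈ n.primeFactors.erase p, 2 * 2 ≤ p * r := fun r hr =>
    Nat.mul_le_mul hp.two_le (hE r hr).1.two_le
  have hprn : ∀ r ∈ n.primeFactors.erase p, p * r ≠ n := fun r hr h =>
    hdiv (by rw [← h, Nat.mul_div_cancel_left _ hp.pos]; exact (hE r hr).1)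
  have hs := sum_le_compositeSum hn
    (s := insert 1 (insert n ((n.primeFactors.erase p).image (p * ·)))) <| by
    simp only [Finset.mem_insert, Finset.mem_image]
    rintro d (rfl | rfl | ⟨r, hr, rfl⟩)
    · exact ⟨one_dvd n, Nat.not_prime_one⟩
    · exact ⟨dvd_rfl, hnp⟩
    · obtain ⟨hr, hrn, hrp⟩ := hE r hr
      exact ⟨((Nat.coprime_primes hp hr).2 hrp.symm).mul_dvd_of_dvd_of_dvd hpn hrn,
        Nat.not_prime_mul hp.ne_one hr.ne_one⟩
  rwa [Finset.sum_insert, Finset.sum_insert, Finset.sum_image, ← Finset.mul_sum] at hs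
  · exact fun _ _ _ _ h => Nat.eq_of_mul_eq_mul_left hp.pos h
  · simpa using hprn
  · simp only [Finset.mem_insert, Finset.mem_image, not_or, not_exists, not_and]
    exact ⟨hn1.ne, fun r hr => by have := hpr r hr; omega⟩

lemma X_neg_of_mem_primeFactors_of_ne {n p q : ℕ} (hp : p ∈ n.primeFactors)
    (hq : q ∈ n.primeFactors) (hqp : q ≠ p) (hdiv : ¬ (n / p).Prime) : X n < 0 := by
  have hnp : ¬ n.Prime := fun h => hqp (by rw [h.primeFactors] at hp hq; simp_all)
  have hC := one_add_add_mul_sum_erase_le_compositeSum hp hnp hdiv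
  have hprime : primeSum n = p + ∑ r ∈ n.primeFactors.erase p, r :=
    (Finset.add_sum_erase _ id hp).symm
  have hqE : q ∈ n.primeFactors.erase p := Finset.mem_erase.2 ⟨hqp, hq⟩
  have hS : q ≤ ∑ r ∈ n.primeFactors.erase p, r :=
    Finset.single_le_sum (f := id) (fun _ _ => Nat.zero_le _) hqE
  have hp2 := (Nat.prime_of_mem_primeFactors hp).two_le
  have hq2 := (Nat.prime_of_mem_primeFactors hq).two_le
  generalize ∑ r ∈ n.primeFactors.erase p, r = S at hC hprime hS
  rw [X, hprime]
  push_cast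
  zify at hC hS hp2 hq2
  nlinarith

lemma X_neg_of_not_prime_div_minFac {n : ℕ} (hn : 1 < n) (hnp : ¬ n.Prime)
    (ht : ¬ (n / n.minFac).Prime) : X n < 0 := by
  set p := n.minFac
  have hp : p.Prime := Nat.minFac_prime hn.ne'
  have hpmem : p ∈ n.primeFactors := Nat.mem_primeFactors.2 ⟨hp, Nat.minFac_dvd n, by omega⟩
  by_cases hq : ∃ q ∈ n.primeFactors, q ≠ p
  · obtain ⟨q, hq, hqp⟩ := hq
    exact X_neg_of_mem_primeFactors_of_ne hpmem hq hqp ht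
  push Not at hq
  have hn_eq : p * (n / p) = n := Nat.mul_div_cancel' (Nat.minFac_dvd n)
  have ht1 : n / p ≠ 1 := fun h => hnp (by rw [← hn_eq, h, mul_one]; exact hp)
  have hpt : p ∣ n / p := by
    have hmin := hq _ (Nat.mem_primeFactors.2 ⟨Nat.minFac_prime ht1,
      (Nat.minFac_dvd _).trans (Nat.div_dvd_of_dvd (Nat.minFac_dvd n)), by omega⟩)
    simpa only [hmin] using Nat.minFac_dvd (n / p)
  refine X_neg_of_primeFactors_eq_singleton
    (Finset.eq_singleton_iff_unique_mem.2 ⟨hpmem, hq⟩) (hn_eq ▸ mul_dvd_mul_left p hpt) ?_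
  intro h
  apply ht
  rwa [← h, Nat.mul_div_cancel_left _ hp.pos]

lemma X_neg_or_eq_mul_primes {n : ℕ} (hn : 1 < n) (hnp : ¬ n.Prime) :
    X n < 0 ∨ ∃ p q : ℕ, p.Prime ∧ q.Prime ∧ p ≤ q ∧ n = p * q := by
  by_cases ht : (n / n.minFac).Prime
  · refine Or.inr ⟨n.minFac, n / n.minFac, Nat.minFac_prime hn.ne', ht,
      Nat.minFac_le_of_dvd ht.two_le (Nat.div_dvd_of_dvd (Nat.minFac_dvd n)),
      (Nat.mul_div_cancel' (Nat.minFac_dvd n)).symm⟩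
  · exact Or.inl (X_neg_of_not_prime_div_minFac hn hnp ht)

lemma X_eq_zero_of_le_one {n : ℕ} (hn : n ≤ 1) : X n = 0 := by
  interval_cases n <;>
    simp [X, primeSum, compositeSum, Finset.filter_singleton, Nat.not_prime_one]

lemma not_satisfiesSurvivorCriteria_and_lt_of_eq_X {n m : ℕ}
    (hn : ¬ SatisfiesSurvivorCriteria n) (hm : 0 < m) (hX : (m : ℤ) = X n) :
    ¬ SatisfiesSurvivorCriteria m ∧ m < n := by
  simp only [SatisfiesSurvivorCriteria, not_or] at hn
  obtain ⟨hnp, hnQ, hn9⟩ := hn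
  rcases le_or_gt n 1 with hn1 | hn1
  · rw [X_eq_zero_of_le_one hn1] at hX
    omega
  rcases X_neg_or_eq_mul_primes hn1 hnp with hneg | ⟨p, q, hp, hq, hpq, rfl⟩
  · omega
  rw [X_mul_of_prime hp hq] at hX
  have hp2 := hp.two_le
  rcases eq_or_ne p q with rfl | hne
  · rw [primeSum_mul_self hp] at hX
    rcases hp.eq_two_or_odd with rfl | hodd
    · obtain rfl : m = 1 := by omega
      exact ⟨not_satisfiesSurvivorCriteria_one, by norm_num⟩
    · have hp3 : p ≠ 3 := by rintro rfl; exact hn9 rfl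
      exact ⟨not_satisfiesSurvivorCriteria_of_even (Nat.even_iff.2 (by omega)) (by omega),
        by nlinarith⟩
  · rw [primeSum_mul_of_ne hp hq hne] at hX
    have hq_odd : q % 2 = 1 := hq.eq_two_or_odd.resolve_left (by omega)
    rcases hp.eq_two_or_odd with rfl | hodd
    · exact ⟨not_satisfiesSurvivorCriteria_of_even (Nat.even_iff.2 (by omega)) (by omega),
        by omega⟩
    · exact absurd ⟨p, q, hp, hq, Nat.odd_iff.2 hodd, Nat.odd_iff.2 hq_odd, hne, rfl⟩ hnQ

lemma Survivor.exists_X_eq {n : ℕ} (h : Survivor n) :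
    ∃ m : ℕ, 0 < m ∧ (m : ℤ) = X n ∧ Survivor m := by
  obtain ⟨a, rfl, hpos, hrec⟩ := h
  exact ⟨a 1, hpos 1, hrec 0, fun i => a (i + 1), rfl, fun i => hpos _, fun i => hrec _⟩

lemma not_survivor_of_X_descends {P : ℕ → Prop}
    (hP : ∀ n m : ℕ, P n → 0 < m → (m : ℤ) = X n → P m ∧ m < n) (n : ℕ) (hn : P n) :
    ¬ Survivor n := by
  induction n using Nat.strong_induction_on with
  | _ n ih =>
  intro hs
  obtain ⟨m, hm, hX, hs'⟩ := hs.exists_X_eq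
  obtain ⟨hPm, hmn⟩ := hP n m hn hm hX
  exact ih m hmn hPm hs'

theorem survivor_criteria_general (n : ℕ) (hsurv : Survivor n) :
    (n.Prime ∧ ¬ (∃ p q : ℕ, p.Prime ∧ q.Prime ∧ Odd p ∧ Odd q ∧ p ≠ q ∧ n = p * q) ∧
        n ≠ 9) ∨
    (¬ n.Prime ∧ (∃ p q : ℕ, p.Prime ∧ q.Prime ∧ Odd p ∧ Odd q ∧ p ≠ q ∧ n = p * q) ∧
        n ≠ 9) ∨
    (¬ n.Prime ∧ ¬ (∃ p q : ℕ, p.Prime ∧ q.Prime ∧ Odd p ∧ Odd q ∧ p ≠ q ∧ n = p * q) ∧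
        n = 9) := by
  have hcrit : SatisfiesSurvivorCriteria n := by
    by_contra h
    exact not_survivor_of_X_descends
      (fun _ _ => not_satisfiesSurvivorCriteria_and_lt_of_eq_X) n h hsurv
  rcases hcrit with hP | hQ | rfl
  · exact Or.inl ⟨hP, fun hQ => IsOddSquarefreeSemiprime.not_prime hQ hP,
      by rintro rfl; norm_num at hP⟩
  · exact Or.inr (Or.inl ⟨hQ.not_prime, hQ,
      by rintro rfl; exact not_isOddSquarefreeSemiprime_nine hQ⟩)
  · exact Or.inr (Or.inr ⟨by norm_num, not_isOddSquarefreeSemiprime_nine, rfl⟩)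

theorem survivor_criteria (n : ℕ) (hn : 0 < n) (hsurv : Survivor n) :
    (n.Prime ∧ ¬ (∃ p q : ℕ, p.Prime ∧ q.Prime ∧ Odd p ∧ Odd q ∧ p ≠ q ∧ n = p * q) ∧
        n ≠ 9) ∨
    (¬ n.Prime ∧ (∃ p q : ℕ, p.Prime ∧ q.Prime ∧ Odd p ∧ Odd q ∧ p ≠ q ∧ n = p * q) ∧
        n ≠ 9) ∨
    (¬ n.Prime ∧ ¬ (∃ p q : ℕ, p.Prime ∧ q.Prime ∧ Odd p ∧ Odd q ∧ p ≠ q ∧ n = p * q) ∧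
        n = 9) :=
  survivor_criteria_general n hsurv
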